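/- arXiv:2201.07668 — 4 statements merged into one kernel-verified Lean document; each statement's English description precedes it below -/
import Mathlib

section
/- For every real x > 0, every integer l ∈ ℤ, and every real c < 0, one has −(1/(2π)) ∫_{−∞}^{∞} exp( x (c+iτ)(2(c+iτ) − 1 − 2l) ) / (c+iτ) dτ = (1/2) [ 1 + erf( (2l+1) √(x/8) ) ]. (This is the evaluation of the contour integral −(1/(2πi)) ∫_{C_−} e^{x s(2s−1−2l)} ds/s over a vertical line C_− passing to the left of the origin.) -/
/-!
Since `Re s < 0` on the line, `1/s = -∫₀^∞ e^{ts} dt`. Inserting this and exchanging the order of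
integration (the integrand is dominated by a Gaussian in `τ` times `e^{ct}`) leaves, for each
`t > 0`, a Gaussian integral along a vertical line, which equals `√(π/2x) e^{-(t-(2l+1)x)²/8x}`.
The remaining integral over `t > 0` of this shifted Gaussian is a tail of the normal distribution,
i.e. `(1 + erf)/2`.
-/

open MeasureTheory

noncomputable def erf (x : ℝ) : ℝ :=
  (2 / Real.sqrt Real.pi) * ∫ s in (0:ℝ)..x, Real.exp (-s ^ 2)

open Set Complex Real

theorem erf_eq_integral (m : ℝ) : √π / 2 * erf m = ∫ s in (0 : ℝ)..m, Real.exp (-s ^ 2) := by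
  have : √π ≠ 0 := (Real.sqrt_pos.2 pi_pos).ne'
  rw [erf]
  field_simp

theorem integral_Ioi_neg_exp_neg_sq (m : ℝ) :
    ∫ v in Ioi (-m), Real.exp (-v ^ 2) = √π / 2 * (1 + erf m) := by
  have hint : Integrable (fun v : ℝ => Real.exp (-v ^ 2)) := by
    simpa using integrable_exp_neg_mul_sq one_pos
  have heven : ∫ v in (-m)..0, Real.exp (-v ^ 2) = ∫ v in (0 : ℝ)..m, Real.exp (-v ^ 2) := by
    have := intervalIntegral.integral_comp_neg (a := 0) (b := m) (fun v : ℝ => Real.exp (-v ^ 2))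
    simp only [neg_zero, neg_sq] at this
    exact this.symm
  rw [← intervalIntegral.integral_interval_add_Ioi hint.integrableOn hint.integrableOn, heven,
    ← erf_eq_integral, mul_add, mul_one, add_comm]
  simpa using congrArg (· + √π / 2 * erf m) (integral_gaussian_Ioi 1)

theorem integral_comp_sub_right_Ioi {E : Type*} [NormedAddCommGroup E] [NormedSpace ℝ E]
    (g : ℝ → E) (a d : ℝ) : ∫ x in Ioi a, g (x - d) = ∫ x in Ioi (a - d), g x := by
  have h := (measurePreserving_sub_right (volume : Measure ℝ) d).setIntegral_preimage_emb
    (MeasurableEquiv.subRight d).measurableEmbedding g (Ioi (a - d))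
  have hpre : (fun x => x - d) ⁻¹' Ioi (a - d) = Ioi a := by ext x; simp
  simpa [hpre] using h

theorem integral_Ioi_exp_neg_sq_sub_div {σ : ℝ} (hσ : 0 < σ) (m : ℝ) :
    ∫ t in Ioi 0, Real.exp (-(t - m) ^ 2 / σ) = √(π * σ) / 2 * (1 + erf (m / √σ)) := by
  have hk : 0 < √σ := Real.sqrt_pos.2 hσ
  have hscale (v : ℝ) : Real.exp (-(√σ * v) ^ 2 / σ) = Real.exp (-v ^ 2) := by
    rw [mul_pow, Real.sq_sqrt hσ.le]
    field_simp
  calc ∫ t in Ioi 0, Real.exp (-(t - m) ^ 2 / σ)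
      = ∫ t in Ioi (-m), Real.exp (-t ^ 2 / σ) := by
        simpa using integral_comp_sub_right_Ioi (fun t => Real.exp (-t ^ 2 / σ)) 0 m
    _ = √σ * ∫ v in Ioi (-(m / √σ)), Real.exp (-(√σ * v) ^ 2 / σ) := by
        rw [← smul_eq_mul, integral_comp_mul_left_Ioi' (fun t => Real.exp (-t ^ 2 / σ)) _ hk,
          mul_neg, mul_div_cancel₀ _ hk.ne']
    _ = √(π * σ) / 2 * (1 + erf (m / √σ)) := by
        simp_rw [hscale, integral_Ioi_neg_exp_neg_sq, Real.sqrt_mul pi_pos.le]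
        ring

theorem one_div_two_pi_mul_integral_Ioi_gaussian {x : ℝ} (hx : 0 < x) (a : ℝ) :
    1 / (2 * π) * ∫ t in Ioi 0, √(π / (2 * x)) * Real.exp (-(t - a * x) ^ 2 / (8 * x)) =
      1 / 2 * (1 + erf (a * √(x / 8))) := by
  have hsqrt : √(π / (2 * x)) * √(π * (8 * x)) = 2 * π := by
    rw [← Real.sqrt_mul (by positivity), show π / (2 * x) * (π * (8 * x)) = (2 * π) ^ 2 by
      field_simp; ring, Real.sqrt_sq (by positivity)]
  have harg : a * x / √(8 * x) = a * √(x / 8) := by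
    have h : √(x / 8) * √(8 * x) = x := by
      rw [← Real.sqrt_mul (by positivity), show x / 8 * (8 * x) = x ^ 2 by ring,
        Real.sqrt_sq hx.le]
    rw [div_eq_iff (by positivity), mul_assoc, h]
  rw [integral_const_mul, integral_Ioi_exp_neg_sq_sub_div (by positivity), harg]
  calc 1 / (2 * π) * (√(π / (2 * x)) * (√(π * (8 * x)) / 2 * (1 + erf (a * √(x / 8)))))
      = √(π / (2 * x)) * √(π * (8 * x)) / (4 * π) * (1 + erf (a * √(x / 8))) := by ring
    _ = 1 / 2 * (1 + erf (a * √(x / 8))) := by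
      rw [hsqrt]
      field_simp
      ring

theorem inv_eq_neg_integral_Ioi_cexp {s : ℂ} (hs : s.re < 0) :
    s⁻¹ = -∫ t in Ioi (0 : ℝ), cexp (s * t) := by
  simp [integral_exp_mul_complex_Ioi hs 0, div_eq_mul_inv]

theorem integral_div_eq_neg_integral_Ioi_integral {f s : ℝ → ℂ} {c : ℝ} (hc : c < 0)
    (hf : Integrable f) (hs : Continuous s) (hre : ∀ τ, (s τ).re ≤ c) :
    ∫ τ, f τ / s τ = -∫ t in Ioi (0 : ℝ), ∫ τ, f τ * cexp (s τ * t) := by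
  have hbound : Integrable (fun p : ℝ × ℝ => ‖f p.1‖ * Real.exp (c * p.2))
      ((volume : Measure ℝ).prod (volume.restrict (Ioi 0))) :=
    hf.norm.mul_prod (integrableOn_exp_mul_Ioi hc 0)
  have hF : Integrable (Function.uncurry fun τ (t : ℝ) => f τ * cexp (s τ * t))
      ((volume : Measure ℝ).prod (volume.restrict (Ioi 0))) := by
    refine hbound.mono' (hf.aestronglyMeasurable.comp_fst.mul ?_) ?_
    · exact (by fun_prop : Continuous fun p : ℝ × ℝ => cexp (s p.1 * p.2)).aestronglyMeasurable
    filter_upwards [Measure.quasiMeasurePreserving_snd.ae (ae_restrict_mem measurableSet_Ioi)]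
      with p (hp : 0 < p.2)
    rw [Function.uncurry_apply_pair, norm_mul, norm_exp, mul_re, ofReal_re, ofReal_im, mul_zero,
      sub_zero]
    gcongr
    exact hre p.1
  simp_rw [div_eq_mul_inv, fun τ => inv_eq_neg_integral_Ioi_cexp ((hre τ).trans_lt hc),
    mul_neg, ← integral_const_mul, integral_neg]
  rw [integral_integral_swap hF]

theorem quadratic_on_vertical_line (A B c : ℂ) (τ : ℝ) :
    A * (c + τ * I) ^ 2 + B * (c + τ * I) =
      -A * τ ^ 2 + (2 * A * c + B) * I * τ + (A * c ^ 2 + B * c) := by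
  linear_combination (A * τ ^ 2) * I_sq

theorem integrable_cexp_quadratic_vertical {A : ℂ} (hA : 0 < A.re) (B c : ℂ) :
    Integrable fun τ : ℝ => cexp (A * (c + τ * I) ^ 2 + B * (c + τ * I)) := by
  simpa only [quadratic_on_vertical_line] using integrable_cexp_quadratic hA _ _

theorem integral_cexp_quadratic_vertical {A : ℂ} (hA : 0 < A.re) (B c : ℂ) :
    ∫ τ : ℝ, cexp (A * (c + τ * I) ^ 2 + B * (c + τ * I)) =
      (π / A) ^ (1 / 2 : ℂ) * cexp (-B ^ 2 / (4 * A)) := by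
  have hA0 : A ≠ 0 := by rintro rfl; simp at hA
  simp_rw [quadratic_on_vertical_line]
  rw [integral_cexp_quadratic (by simpa using hA), neg_neg]
  congr 2
  field_simp
  linear_combination ((2 * A * c + B) ^ 2) * I_sq

theorem integral_cexp_quadratic_vertical_div {A : ℂ} (hA : 0 < A.re) (B : ℂ) {c : ℝ}
    (hc : c < 0) :
    ∫ τ : ℝ, cexp (A * (c + τ * I) ^ 2 + B * (c + τ * I)) / (c + τ * I) =
      -∫ t in Ioi (0 : ℝ), (π / A) ^ (1 / 2 : ℂ) * cexp (-(B + t) ^ 2 / (4 * A)) := by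
  rw [integral_div_eq_neg_integral_Ioi_integral hc (integrable_cexp_quadratic_vertical hA B c)
    (by fun_prop) (fun τ => by simp)]
  congr 1
  refine setIntegral_congr_fun measurableSet_Ioi fun t _ => ?_
  simp_rw [← Complex.exp_add]
  rw [← integral_cexp_quadratic_vertical hA (B + t) c]
  congr 1 with τ
  ring_nf

/-- Evaluation of the contour integral
`-(1/(2πi)) ∫_{C_-} e^{x s(2s-1-2l)} ds/s` over a vertical line to the left of the
origin: it equals `(1/2)[1 + erf((2l+1)√(x/8))]`. -/
theorem contour_integral_erf (x : ℝ) (hx : 0 < x) (l : ℤ) (c : ℝ) (hc : c < 0) :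
    -(1 / (2 * (Real.pi : ℂ))) * ∫ τ : ℝ,
        Complex.exp ((x : ℂ) * ((c : ℂ) + (τ : ℂ) * Complex.I) *
          (2 * ((c : ℂ) + (τ : ℂ) * Complex.I) - 1 - 2 * (l : ℂ))) /
        ((c : ℂ) + (τ : ℂ) * Complex.I)
      = ((1 / 2 * (1 + erf ((2 * (l : ℝ) + 1) * Real.sqrt (x / 8))) : ℝ) : ℂ) := by
  set m : ℝ := (2 * l + 1) * x
  have hexponent (s : ℂ) :
      x * s * (2 * s - 1 - 2 * l) = (2 * x : ℂ) * s ^ 2 + (-m : ℝ) * s := by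
    push_cast [m]
    ring
  have hgauss (t : ℝ) :
      (π / (2 * x : ℂ)) ^ (1 / 2 : ℂ) * cexp (-((-m : ℝ) + t) ^ 2 / (4 * (2 * x))) =
        ((√(π / (2 * x)) * Real.exp (-(t - m) ^ 2 / (8 * x)) : ℝ) : ℂ) := by
    rw [ofReal_mul, Real.sqrt_eq_rpow, ofReal_cpow (by positivity), ofReal_exp]
    push_cast
    congr 2
    ring
  simp_rw [hexponent]
  rw [integral_cexp_quadratic_vertical_div (by simpa using hx) _ hc]
  simp_rw [hgauss]
  rw [integral_complex_ofReal, neg_mul_neg, ← one_div_two_pi_mul_integral_Ioi_gaussian hx]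
  push_cast
  rfl
end

section
/- For every α > 0, ∫₀¹ erf( √(α/(8t)) ) dt = (1 + α/4) · erf( √(α/8) ) − α/4 + √(α/(2π)) · e^{−α/8}. -/
/-!
Integrating by parts twice shows that
`G b t = (t + 2b²) erf (b/√t) + (2/√π) b √t e^{-b²/t}`
is a primitive of `t ↦ erf (b/√t)` on `(0, ∞)`. For `b > 0` it tends to `2b²` as `t → 0⁺`,
since `erf (b/√t) → 1` and `√t e^{-b²/t} → 0`, so `∫₀¹ erf (b/√t) dt = G b 1 - 2b²`;
the theorem is the case `b = √(α/8)`.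
-/

open MeasureTheory Filter

/-- `c(α) = ∫_0^1 erf(√(α/(8t))) dt`. -/
noncomputable def cFun (α : ℝ) : ℝ :=
  ∫ t in (0:ℝ)..1, erf (Real.sqrt (α / (8 * t)))

open Topology Real

lemma hasDerivAt_erf (x : ℝ) : HasDerivAt erf (2 / √π * exp (-x ^ 2)) x := by
  have hc : Continuous fun s : ℝ => exp (-s ^ 2) := by fun_prop
  exact (intervalIntegral.integral_hasDerivAt_right (hc.intervalIntegrable 0 x)
    (hc.stronglyMeasurableAtFilter _ _) hc.continuousAt).const_mul _

lemma continuous_erf : Continuous erf :=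
  continuous_iff_continuousAt.2 fun x => (hasDerivAt_erf x).continuousAt

lemma erf_zero : erf 0 = 0 := by simp [erf]

lemma monotone_erf : Monotone erf :=
  monotone_of_hasDerivAt_nonneg hasDerivAt_erf fun x => by positivity

lemma tendsto_erf_atTop : Tendsto erf atTop (𝓝 1) := by
  have hint : IntegrableOn (fun s : ℝ => exp (-s ^ 2)) (Set.Ioi 0) := by
    simpa using (integrable_exp_neg_mul_sq one_pos).integrableOn (s := Set.Ioi (0 : ℝ))
  have hgauss : ∫ s in Set.Ioi (0 : ℝ), exp (-s ^ 2) = √π / 2 := by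
    simpa using integral_gaussian_Ioi 1
  have h := (intervalIntegral_tendsto_integral_Ioi 0 hint tendsto_id).const_mul (2 / √π)
  rwa [hgauss, div_mul_div_cancel₀' (by positivity), div_self (by positivity)] at h

lemma erf_le_one (x : ℝ) : erf x ≤ 1 :=
  monotone_erf.ge_of_tendsto tendsto_erf_atTop x

lemma erf_nonneg {x : ℝ} (hx : 0 ≤ x) : 0 ≤ erf x :=
  erf_zero ▸ monotone_erf hx

noncomputable def erfDivSqrtPrimitive (b t : ℝ) : ℝ :=
  (t + 2 * b ^ 2) * erf (b / √t) + 2 / √π * b * √t * exp (-(b / √t) ^ 2)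

lemma hasDerivAt_erfDivSqrtPrimitive (b : ℝ) {t : ℝ} (ht : 0 < t) :
    HasDerivAt (erfDivSqrtPrimitive b) (erf (b / √t)) t := by
  have hs : 0 < √t := sqrt_pos.2 ht
  have hsqrt := hasDerivAt_sqrt ht.ne'
  have hq := (hasDerivAt_const t b).fun_div hsqrt hs.ne'
  have hE := (hasDerivAt_erf _).comp t hq
  have hX : HasDerivAt (fun t => exp (-(b / √t) ^ 2)) _ t := ((hq.fun_pow 2).fun_neg).exp
  refine ((((hasDerivAt_id t).add_const (2 * b ^ 2)).mul hE).add
    ((hsqrt.const_mul (2 / √π * b)).mul hX)).congr_deriv ?_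
  obtain ⟨s, hs0, rfl⟩ : ∃ s, 0 < s ∧ s ^ 2 = t := ⟨√t, hs, sq_sqrt ht.le⟩
  simp only [Function.comp_apply, id, sqrt_sq hs0.le, Nat.cast_ofNat, Nat.add_one_sub_one, pow_one]
  field_simp
  ring

lemma tendsto_sqrt_nhdsGT_zero : Tendsto (√·) (𝓝[>] 0) (𝓝[>] 0) := by
  refine tendsto_nhdsWithin_of_tendsto_nhds_of_eventually_within _ ?_ ?_
  · simpa using (continuous_sqrt.tendsto 0).mono_left nhdsWithin_le_nhds
  · filter_upwards [self_mem_nhdsWithin] with t ht using sqrt_pos.2 ht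

lemma tendsto_div_sqrt_nhdsGT_zero {b : ℝ} (hb : 0 < b) :
    Tendsto (fun t => b / √t) (𝓝[>] 0) atTop := by
  simpa only [div_eq_mul_inv, Function.comp_apply] using
    (tendsto_inv_nhdsGT_zero.comp tendsto_sqrt_nhdsGT_zero).const_mul_atTop hb

lemma tendsto_erfDivSqrtPrimitive_nhdsGT_zero {b : ℝ} (hb : 0 < b) :
    Tendsto (erfDivSqrtPrimitive b) (𝓝[>] 0) (𝓝 (2 * b ^ 2)) := by
  have hq := tendsto_div_sqrt_nhdsGT_zero hb
  have hsqrt : Tendsto (√·) (𝓝[>] 0) (𝓝 0) :=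
    tendsto_sqrt_nhdsGT_zero.mono_right nhdsWithin_le_nhds
  have hexp : Tendsto (fun t => exp (-(b / √t) ^ 2)) (𝓝[>] 0) (𝓝 0) :=
    tendsto_exp_atBot.comp (tendsto_neg_atTop_atBot.comp ((tendsto_pow_atTop two_ne_zero).comp hq))
  have h := (((tendsto_nhdsWithin_of_tendsto_nhds tendsto_id).add_const (2 * b ^ 2)).mul
    (tendsto_erf_atTop.comp hq)).add ((hsqrt.const_mul (2 / √π * b)).mul hexp)
  unfold erfDivSqrtPrimitive
  simpa using h

lemma intervalIntegrable_erf_div_sqrt {b : ℝ} (hb : 0 ≤ b) (a T : ℝ) :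
    IntervalIntegrable (fun t => erf (b / √t)) volume a T := by
  refine (intervalIntegrable_const (c := (1 : ℝ))).mono_fun' ?_ (ae_of_all _ fun t => ?_)
  · exact (continuous_erf.measurable.comp (by fun_prop)).aestronglyMeasurable
  · dsimp only
    rw [norm_of_nonneg (erf_nonneg (div_nonneg hb (sqrt_nonneg t)))]
    exact erf_le_one _

theorem integral_erf_div_sqrt {b T : ℝ} (hb : 0 < b) (hT : 0 < T) :
    ∫ t in 0..T, erf (b / √t) = erfDivSqrtPrimitive b T - 2 * b ^ 2 :=
  intervalIntegral.integral_eq_sub_of_hasDerivAt_of_tendsto hT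
    (fun _ ht => hasDerivAt_erfDivSqrtPrimitive b ht.1)
    (intervalIntegrable_erf_div_sqrt hb.le 0 T) (tendsto_erfDivSqrtPrimitive_nhdsGT_zero hb)
    (hasDerivAt_erfDivSqrtPrimitive b hT).continuousAt.continuousWithinAt

/-- Closed form for `c(α)`:
`∫_0^1 erf(√(α/(8t))) dt = (1 + α/4) erf(√(α/8)) - α/4 + √(α/(2π)) e^{-α/8}`. -/
theorem cFun_closed_form (α : ℝ) (hα : 0 < α) :
    cFun α = (1 + α / 4) * erf (Real.sqrt (α / 8)) - α / 4
      + Real.sqrt (α / (2 * Real.pi)) * Real.exp (-α / 8) := by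
  set b := √(α / 8)
  have hb : 0 < b := sqrt_pos.2 (by positivity)
  have hb2 : b ^ 2 = α / 8 := sq_sqrt (by positivity)
  have hintegrand (t : ℝ) : √(α / (8 * t)) = b / √t := by
    rw [← div_div, sqrt_div (by positivity)]
  have hcoef : √(α / (2 * π)) = 2 / √π * b := by
    rw [show α / (2 * π) = (2 / √π) ^ 2 * (α / 8) by rw [div_pow, sq_sqrt pi_pos.le]; ring,
      sqrt_mul (by positivity), sqrt_sq (by positivity)]
  rw [cFun]
  simp_rw [hintegrand]
  rw [integral_erf_div_sqrt hb one_pos, erfDivSqrtPrimitive, sqrt_one, div_one, hb2, hcoef, neg_div]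
  ring
end

section
/- Let s(α) := ∫₀¹ (α/(8πt)) Σ_{k∈ℤ} ( ∫_{2k−1}^{2k+1} e^{−αx²/(8t)} dx )² dt for α > 0. Then lim_{α → 0⁺} s(α)/√α = 1/√π; that is, s(α) ∼ √(α/π) as α → 0⁺. -/
open MeasureTheory Filter

/-- `s(α) = ∫_0^1 (α/(8πt)) Σ_{k∈ℤ} (∫_{2k-1}^{2k+1} e^{-αx²/(8t)} dx)² dt`. -/
noncomputable def sFun (α : ℝ) : ℝ :=
  ∫ t in (0:ℝ)..1, (α / (8 * Real.pi * t)) *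
    ∑' k : ℤ, (∫ x in (2 * (k : ℝ) - 1)..(2 * (k : ℝ) + 1),
      Real.exp (-(α * x ^ 2) / (8 * t))) ^ 2

/-!
With `b = α / (8t)`, the integrand of `s(α)/√α` is `√α/(8πt) · Σₖ gₖ(b)²`, where `gₖ(b)` is
the integral of `e^{-bx²}` over the block `(2k - 1, 2k + 1]`. Cauchy–Schwarz on each block
gives `gₖ² ≤ 2 ∫_{block} e^{-2bx²}`. Conversely, `e^{-b(|x|+2)²} ≤ e^{-by²}` for `x, y` in the
same block, which gives `gₖ² ≥ 2 ∫_{block} e^{-2b(|x|+2)²}`. Summing over the blocks,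
`√(2π/b) - 8 ≤ Σₖ gₖ(b)² ≤ √(2π/b)`, so the integrand lies between
`1/(2√(πt)) - √α/(πt)` and `1/(2√(πt))`, and dominated convergence gives
`s(α)/√α → ∫₀¹ dt/(2√(πt)) = 1/√π`.
-/

open Set Real Topology

section SquaredIntegral

variable {X : Type*} [MeasurableSpace X] {μ : Measure X} [IsFiniteMeasure μ] {f h : X → ℝ}

theorem sq_integral_le_measureReal_mul_integral_sq (hf : Integrable f μ)
    (hf2 : Integrable (fun x => f x ^ 2) μ) :
    (∫ x, f x ∂μ) ^ 2 ≤ μ.real univ * ∫ x, f x ^ 2 ∂μ := by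
  set V := μ.real univ
  set m := ∫ x, f x ∂μ
  have hV : 0 ≤ V := measureReal_nonneg
  -- `0 ≤ ∫ (V f - m)² = V (V ∫ f² - m²)`
  have hvar : 0 ≤ ∫ x, (V * f x - m) ^ 2 ∂μ := integral_nonneg fun x => sq_nonneg _
  have hexpand : ∫ x, (V * f x - m) ^ 2 ∂μ = V * (V * ∫ x, f x ^ 2 ∂μ - m ^ 2) := by
    have hsq : ∀ x, (V * f x - m) ^ 2 = V ^ 2 * f x ^ 2 - 2 * V * m * f x + m ^ 2 :=
      fun x => by ring
    have hlin : Integrable (fun x => V ^ 2 * f x ^ 2 - 2 * V * m * f x) μ :=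
      (hf2.const_mul _).sub (hf.const_mul _)
    simp_rw [hsq]
    rw [integral_add hlin (integrable_const _),
      integral_sub (hf2.const_mul _) (hf.const_mul _), integral_const_mul, integral_const_mul,
      integral_const, smul_eq_mul]
    ring
  rcases hV.eq_or_lt with hV0 | hVpos
  · have hμ : μ = 0 := by
      rw [← Measure.measure_univ_eq_zero]
      exact (measureReal_eq_zero_iff (measure_ne_top μ univ)).1 hV0.symm
    simp [m, hμ]
  · rw [hexpand] at hvar
    nlinarith [(mul_nonneg_iff_of_pos_left hVpos).1 hvar]

theorem measureReal_mul_integral_sq_le_sq_integral (hf : Integrable f μ)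
    (hh2 : Integrable (fun x => h x ^ 2) μ) (hh : ∀ᵐ x ∂μ, 0 ≤ h x)
    (hle : ∀ᵐ x ∂μ, ∀ᵐ y ∂μ, h x ≤ f y) :
    μ.real univ * ∫ x, h x ^ 2 ∂μ ≤ (∫ x, f x ∂μ) ^ 2 := by
  set V := μ.real univ
  set m := ∫ x, f x ∂μ
  have hV : 0 ≤ V := measureReal_nonneg
  have hpt : ∀ᵐ x ∂μ, V ^ 2 * h x ^ 2 ≤ m ^ 2 := by
    filter_upwards [hh, hle] with x hx0 hx
    have hVh : V * h x ≤ m := by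
      simpa [V, integral_const, smul_eq_mul, mul_comm] using
        integral_mono_ae (integrable_const (h x)) hf hx
    nlinarith [mul_nonneg hV hx0]
  have hint : V ^ 2 * ∫ x, h x ^ 2 ∂μ ≤ V * m ^ 2 := by
    have := integral_mono_ae (hh2.const_mul _) (integrable_const _) hpt
    rwa [integral_const_mul, integral_const, smul_eq_mul] at this
  rcases hV.eq_or_lt with hV0 | hVpos
  · rw [← hV0, zero_mul]; positivity
  · nlinarith

-- An `abbrev`, so that the finite-measure instances for `volume.restrict (Ioc a b)` apply.
abbrev block (k : ℤ) : Set ℝ := Ioc (2 * k - 1) (2 * k + 1)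

theorem block_eq_Ioc_add_zsmul (k : ℤ) :
    block k = Ioc (-1 + k • (2 : ℝ)) (-1 + (k + 1) • 2) := by
  simp only [block, zsmul_eq_mul]
  push_cast
  congr 1 <;> ring

theorem iUnion_block : ⋃ k, block k = univ := by
  simpa only [block_eq_Ioc_add_zsmul] using iUnion_Ioc_add_zsmul two_pos (-1 : ℝ)

theorem pairwise_disjoint_block : Pairwise (Function.onFun Disjoint block) := by
  convert pairwise_disjoint_Ioc_add_zsmul (-1 : ℝ) (2 : ℝ) using 3
  exact block_eq_Ioc_add_zsmul _

theorem volume_real_block (k : ℤ) : volume.real (block k) = 2 := by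
  rw [Real.volume_real_Ioc]
  norm_num

theorem abs_sub_le_two_of_mem_block {k : ℤ} {x y : ℝ} (hx : x ∈ block k)
    (hy : y ∈ block k) : |x - y| ≤ 2 := by
  rw [abs_le]
  constructor <;> linarith [hx.1, hx.2, hy.1, hy.2]

theorem hasSum_integral_block {f : ℝ → ℝ} (hf : Integrable f) :
    HasSum (fun k => ∫ x in block k, f x) (∫ x, f x) := by
  simpa only [iUnion_block, Measure.restrict_univ] using
    hasSum_integral_iUnion (fun _ => measurableSet_Ioc) pairwise_disjoint_block hf.integrableOn

noncomputable def blockSqSum (f : ℝ → ℝ) : ℝ := ∑' k : ℤ, (∫ x in block k, f x) ^ 2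

section BlockSqSum

variable {f g h : ℝ → ℝ}

theorem blockSqSum_nonneg (f : ℝ → ℝ) : 0 ≤ blockSqSum f :=
  tsum_nonneg fun _ => sq_nonneg _

theorem sq_integral_block_le (hf : Integrable f) (hf2 : Integrable fun x => f x ^ 2) (k : ℤ) :
    (∫ x in block k, f x) ^ 2 ≤ 2 * ∫ x in block k, f x ^ 2 := by
  simpa only [measureReal_restrict_apply_univ, volume_real_block] using
    sq_integral_le_measureReal_mul_integral_sq (μ := volume.restrict (block k)) hf.integrableOn
      hf2.integrableOn

theorem summable_sq_integral_block (hf : Integrable f) (hf2 : Integrable fun x => f x ^ 2) :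
    Summable fun k : ℤ => (∫ x in block k, f x) ^ 2 :=
  .of_nonneg_of_le (fun _ => sq_nonneg _) (sq_integral_block_le hf hf2)
    ((hasSum_integral_block hf2).summable.mul_left 2)

theorem blockSqSum_le (hf : Integrable f) (hf2 : Integrable fun x => f x ^ 2) :
    blockSqSum f ≤ 2 * ∫ x, f x ^ 2 :=
  hasSum_le (sq_integral_block_le hf hf2) (summable_sq_integral_block hf hf2).hasSum
    ((hasSum_integral_block hf2).mul_left 2)

theorem two_mul_integral_sq_le_blockSqSum (hf : Integrable f) (hf2 : Integrable fun x => f x ^ 2)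
    (hh2 : Integrable fun x => h x ^ 2) (hh : ∀ x, 0 ≤ h x)
    (hhf : ∀ x y, |x - y| ≤ 2 → h x ≤ f y) :
    2 * ∫ x, h x ^ 2 ≤ blockSqSum f := by
  refine hasSum_le (fun k => ?_) ((hasSum_integral_block hh2).mul_left 2)
    (summable_sq_integral_block hf hf2).hasSum
  have hmem : ∀ᵐ x ∂volume.restrict (block k), x ∈ block k :=
    ae_restrict_mem measurableSet_Ioc
  simpa only [measureReal_restrict_apply_univ, volume_real_block] using
    measureReal_mul_integral_sq_le_sq_integral (μ := volume.restrict (block k)) hf.integrableOn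
      hh2.integrableOn
      (.of_forall hh) (hmem.mono fun x hx => hmem.mono fun y hy =>
        hhf x y (abs_sub_le_two_of_mem_block hx hy))

theorem blockSqSum_mono (hf : Integrable f) (hf2 : Integrable fun x => f x ^ 2)
    (hg : Integrable g) (hg2 : Integrable fun x => g x ^ 2) (hf0 : ∀ x, 0 ≤ f x)
    (hfg : ∀ x, f x ≤ g x) :
    blockSqSum f ≤ blockSqSum g :=
  (summable_sq_integral_block hf hf2).tsum_le_tsum
    (fun _ => pow_le_pow_left₀ (setIntegral_nonneg measurableSet_Ioc fun x _ => hf0 x)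
      (setIntegral_mono hf.integrableOn hg.integrableOn hfg) 2)
    (summable_sq_integral_block hg hg2)

end BlockSqSum

section Gaussian

variable {b : ℝ}

theorem exp_neg_mul_sq_sq (b x : ℝ) : exp (-b * x ^ 2) ^ 2 = exp (-(2 * b) * x ^ 2) := by
  rw [sq (exp _), ← exp_add]
  ring_nf

theorem integrable_exp_neg_mul_sq_sq (hb : 0 < b) :
    Integrable fun x : ℝ => exp (-b * x ^ 2) ^ 2 := by
  simpa only [exp_neg_mul_sq_sq] using integrable_exp_neg_mul_sq (mul_pos two_pos hb)

theorem two_mul_sqrt_pi_div_two_mul (b : ℝ) : 2 * √(π / (2 * b)) = √(2 * π / b) := by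
  rw [← sqrt_sq zero_le_two, ← sqrt_mul (sq_nonneg 2)]
  congr 1
  field_simp
  ring

theorem blockSqSum_gaussian_le (hb : 0 < b) :
    blockSqSum (fun x => exp (-b * x ^ 2)) ≤ √(2 * π / b) :=
  calc blockSqSum (fun x => exp (-b * x ^ 2))
      ≤ 2 * ∫ x, exp (-b * x ^ 2) ^ 2 :=
        blockSqSum_le (integrable_exp_neg_mul_sq hb) (integrable_exp_neg_mul_sq_sq hb)
    _ = √(2 * π / b) := by
        simp_rw [exp_neg_mul_sq_sq, integral_gaussian, two_mul_sqrt_pi_div_two_mul]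

theorem sqrt_pi_div_sub_le_integral_exp_neg_mul_abs_add_sq {c L : ℝ} (hc : 0 < c) (hL : 0 ≤ L) :
    √(π / c) - 2 * L ≤ ∫ x, exp (-c * (|x| + L) ^ 2) := by
  have hshift : ∫ x in Ioi 0, exp (-c * (x + L) ^ 2) = ∫ x in Ioi L, exp (-c * x ^ 2) := by
    simpa only [preimage_add_const_Ioi, sub_self] using
      (measurePreserving_add_right volume L).setIntegral_preimage_emb
        (measurableEmbedding_addRight L) (fun x => exp (-c * x ^ 2)) (Ioi L)
  have hsplit : ∫ x in Ioi 0, exp (-c * x ^ 2)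
      = (∫ x in Ioc 0 L, exp (-c * x ^ 2)) + ∫ x in Ioi L, exp (-c * x ^ 2) := by
    rw [← Ioc_union_Ioi_eq_Ioi hL, setIntegral_union Ioc_disjoint_Ioi_same measurableSet_Ioi
      (integrable_exp_neg_mul_sq hc).integrableOn (integrable_exp_neg_mul_sq hc).integrableOn]
  have hIoc : ∫ x in Ioc 0 L, exp (-c * x ^ 2) ≤ L := by
    have := norm_setIntegral_le_of_norm_le_const
      (measure_Ioc_lt_top (μ := volume) (a := (0 : ℝ)) (b := L))
      (f := fun x => exp (-c * x ^ 2)) (C := 1) fun x _ => by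
        rw [norm_of_nonneg (exp_pos _).le, exp_le_one_iff]
        nlinarith [sq_nonneg x]
    rw [Real.volume_real_Ioc_of_le hL, sub_zero, one_mul] at this
    exact (le_abs_self _).trans this
  rw [integral_comp_abs (f := fun x => exp (-c * (x + L) ^ 2)), hshift]
  rw [integral_gaussian_Ioi] at hsplit
  linarith

theorem sub_le_blockSqSum_gaussian (hb : 0 < b) :
    √(2 * π / b) - 8 ≤ blockSqSum (fun x => exp (-b * x ^ 2)) := by
  have h2b : 0 < 2 * b := mul_pos two_pos hb
  have hmajor : ∀ x : ℝ, ‖exp (-(2 * b) * (|x| + 2) ^ 2)‖ ≤ exp (-(2 * b) * x ^ 2) :=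
    fun x => by
      rw [norm_of_nonneg (exp_pos _).le, exp_le_exp]
      nlinarith [sq_abs x, abs_nonneg x]
  have hint : Integrable fun x : ℝ => exp (-b * (|x| + 2) ^ 2) ^ 2 := by
    simp_rw [exp_neg_mul_sq_sq]
    exact (integrable_exp_neg_mul_sq h2b).mono' (by fun_prop) (.of_forall hmajor)
  have hblock : ∀ x y : ℝ, |x - y| ≤ 2 → exp (-b * (|x| + 2) ^ 2) ≤ exp (-b * y ^ 2) :=
    fun x y hxy => by
      have hy : |y| ≤ |x| + 2 := by
        have := abs_sub_abs_le_abs_sub y x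
        rw [abs_sub_comm] at this
        linarith
      rw [exp_le_exp, ← sq_abs y]
      nlinarith [pow_le_pow_left₀ (abs_nonneg y) hy 2]
  calc √(2 * π / b) - 8 = 2 * (√(π / (2 * b)) - 2 * 2) := by
        rw [mul_sub, two_mul_sqrt_pi_div_two_mul]
        norm_num
    _ ≤ 2 * ∫ x, exp (-b * (|x| + 2) ^ 2) ^ 2 := by
        simp_rw [exp_neg_mul_sq_sq]
        gcongr
        exact sqrt_pi_div_sub_le_integral_exp_neg_mul_abs_add_sq h2b zero_le_two
    _ ≤ blockSqSum (fun x => exp (-b * x ^ 2)) :=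
        two_mul_integral_sq_le_blockSqSum (integrable_exp_neg_mul_sq hb)
          (integrable_exp_neg_mul_sq_sq hb) hint (fun _ => (exp_pos _).le) hblock

theorem blockSqSum_gaussian_antitoneOn :
    AntitoneOn (fun b => blockSqSum (fun x => exp (-b * x ^ 2))) (Ioi 0) :=
  fun b hb b' hb' hbb' => blockSqSum_mono (integrable_exp_neg_mul_sq hb')
    (integrable_exp_neg_mul_sq_sq hb') (integrable_exp_neg_mul_sq hb)
    (integrable_exp_neg_mul_sq_sq hb) (fun _ => (exp_pos _).le)
    (fun x => exp_le_exp.2 (by nlinarith [sq_nonneg x]))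

end Gaussian

section Integrand

variable {α t : ℝ}

noncomputable def sIntegrand (α t : ℝ) : ℝ :=
  √α / (8 * π * t) * blockSqSum (fun x => exp (-(α / (8 * t)) * x ^ 2))

theorem sFun_div_sqrt (α : ℝ) : sFun α / √α = ∫ t in Ioc 0 1, sIntegrand α t := by
  rw [sFun, intervalIntegral.integral_of_le zero_le_one, ← integral_div]
  refine setIntegral_congr_fun measurableSet_Ioc fun t _ => ?_
  simp only [sIntegrand, blockSqSum]
  rw [mul_div_right_comm, div_right_comm, div_sqrt]
  congr 2 with k
  rw [intervalIntegral.integral_of_le (by linarith)]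
  congr 2 with x
  ring_nf

theorem sIntegrand_nonneg (ht : 0 < t) : 0 ≤ sIntegrand α t := by
  have := blockSqSum_nonneg fun x => exp (-(α / (8 * t)) * x ^ 2)
  unfold sIntegrand
  positivity

theorem sqrt_div_mul_sqrt_two_pi_div (hα : 0 < α) (ht : 0 < t) :
    √α / (8 * π * t) * √(2 * π / (α / (8 * t))) = 1 / (2 * √(π * t)) := by
  rw [div_mul_eq_mul_div, ← sqrt_mul hα.le,
    show α * (2 * π / (α / (8 * t))) = 4 ^ 2 * (π * t) by field_simp; ring,
    sqrt_mul (by positivity), sqrt_sq (by norm_num)]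
  have hs : 0 < √(π * t) := by positivity
  field_simp
  rw [sq_sqrt (by positivity)]
  ring

theorem sIntegrand_le (hα : 0 < α) (ht : 0 < t) : sIntegrand α t ≤ 1 / (2 * √(π * t)) := by
  rw [← sqrt_div_mul_sqrt_two_pi_div hα ht, sIntegrand]
  gcongr
  exact blockSqSum_gaussian_le (by positivity)

theorem sub_le_sIntegrand (hα : 0 < α) (ht : 0 < t) :
    1 / (2 * √(π * t)) - √α / (π * t) ≤ sIntegrand α t :=
  calc 1 / (2 * √(π * t)) - √α / (π * t)
      = √α / (8 * π * t) * (√(2 * π / (α / (8 * t))) - 8) := by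
        rw [mul_sub, sqrt_div_mul_sqrt_two_pi_div hα ht]
        field_simp
    _ ≤ sIntegrand α t := by
        unfold sIntegrand
        gcongr
        exact sub_le_blockSqSum_gaussian (by positivity)

theorem tendsto_sIntegrand (ht : 0 < t) :
    Tendsto (fun α => sIntegrand α t) (𝓝[>] 0) (𝓝 (1 / (2 * √(π * t)))) := by
  have hsqrt : Tendsto (fun α => √α) (𝓝[>] 0) (𝓝 0) := by
    simpa only [sqrt_zero] using (continuous_sqrt.tendsto 0).mono_left nhdsWithin_le_nhds
  have hlow : Tendsto (fun α => 1 / (2 * √(π * t)) - √α / (π * t)) (𝓝[>] 0)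
      (𝓝 (1 / (2 * √(π * t)))) := by
    simpa only [zero_div, sub_zero] using
      (hsqrt.div_const (π * t)).const_sub (1 / (2 * √(π * t)))
  refine tendsto_of_tendsto_of_tendsto_of_le_of_le' hlow tendsto_const_nhds ?_ ?_ <;>
    filter_upwards [self_mem_nhdsWithin] with α hα
  exacts [sub_le_sIntegrand hα ht, sIntegrand_le hα ht]

theorem aestronglyMeasurable_sIntegrand (hα : 0 < α) :
    AEStronglyMeasurable (sIntegrand α) (volume.restrict (Ioc 0 1)) := by
  have hb : ∀ t ∈ Ioc (0 : ℝ) 1, α / (8 * t) ∈ Ioi 0 := fun t ht => by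
    have := ht.1
    exact mem_Ioi.2 (by positivity)
  have hmono : MonotoneOn (fun t => blockSqSum (fun x => exp (-(α / (8 * t)) * x ^ 2)))
      (Ioc 0 1) := fun t ht t' ht' htt' =>
    blockSqSum_gaussian_antitoneOn (hb t' ht') (hb t ht)
      (div_le_div_of_nonneg_left hα.le (by linarith [ht.1]) (by linarith))
  exact ((by fun_prop : Measurable fun t => √α / (8 * π * t)).aemeasurable.mul
    (aemeasurable_restrict_of_monotoneOn measurableSet_Ioc hmono)).aestronglyMeasurable

theorem one_div_two_mul_sqrt_pi_mul_eq (ht : 0 < t) :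
    1 / (2 * √(π * t)) = (2 * √π)⁻¹ * t ^ (-(1 / 2) : ℝ) := by
  rw [rpow_neg ht.le, ← sqrt_eq_rpow, sqrt_mul pi_pos.le]
  field_simp

theorem integrableOn_one_div_two_mul_sqrt_pi_mul :
    IntegrableOn (fun t => 1 / (2 * √(π * t))) (Ioc 0 1) :=
  IntegrableOn.congr_fun
    ((intervalIntegral.intervalIntegrable_rpow' (a := 0) (b := 1)
      (by norm_num : (-1 : ℝ) < -(1 / 2))).1.const_mul (2 * √π)⁻¹)
    (fun _ ht => (one_div_two_mul_sqrt_pi_mul_eq ht.1).symm) measurableSet_Ioc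

theorem integral_one_div_two_mul_sqrt_pi_mul :
    ∫ t in Ioc 0 1, 1 / (2 * √(π * t)) = 1 / √π := by
  rw [setIntegral_congr_fun measurableSet_Ioc fun _ ht => one_div_two_mul_sqrt_pi_mul_eq ht.1,
    integral_const_mul, ← intervalIntegral.integral_of_le zero_le_one,
    integral_rpow (Or.inl (by norm_num))]
  norm_num
  field_simp

end Integrand

/-- `s(α) ~ √(α/π)` as `α → 0⁺`, i.e. `s(α)/√α → 1/√π`. -/
theorem sFun_asymp_zero :
    Tendsto (fun α : ℝ => sFun α / Real.sqrt α) (nhdsWithin 0 (Set.Ioi 0))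
      (nhds (1 / Real.sqrt Real.pi)) := by
  have hlim := tendsto_integral_filter_of_dominated_convergence (l := 𝓝[>] 0)
    (μ := volume.restrict (Ioc 0 1))
    (fun t => 1 / (2 * √(π * t)))
    (eventually_mem_nhdsWithin.mono fun α hα => aestronglyMeasurable_sIntegrand hα)
    (eventually_mem_nhdsWithin.mono fun α hα =>
      (ae_restrict_mem measurableSet_Ioc).mono fun t ht => by
        rw [norm_of_nonneg (sIntegrand_nonneg ht.1)]
        exact sIntegrand_le hα ht.1)
    integrableOn_one_div_two_mul_sqrt_pi_mul
    ((ae_restrict_mem measurableSet_Ioc).mono fun t ht => tendsto_sIntegrand ht.1)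
  rw [integral_one_div_two_mul_sqrt_pi_mul] at hlim
  simpa only [sFun_div_sqrt] using hlim
end SquaredIntegral
end

section
/- One has lim_{α → 0⁺} √α · Σ_{k∈ℤ} ( ∫_{2k−1}^{2k+1} e^{−αx²/8} dx )² = 4√π; that is, Σ_{k∈ℤ} (∫_{2k−1}^{2k+1} e^{−αx²/8} dx)² ∼ 4√π/√α as α → 0⁺. -/
/-!
Write `I_k` for the integral of `e^{-αx²/8}` over `[2k-1, 2k+1]`. Jensen's inequality on that
interval, once for `t ↦ t²` and once for `exp`, gives
`4 e^{-α/12} e^{-αk²} ≤ I_k² ≤ 2 ∫_{2k-1}^{2k+1} e^{-αx²/4}`.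
Summing over `k`, the right side adds up to the Gaussian integral `4 √(π/α)`, and the left side to
`4 e^{-α/12} θ(α)` with `θ(c) = ∑ₙ e^{-cn²}`. Jacobi's identity `√c θ(c) = √π θ(π²/c)` together with
`θ ≥ 1` gives `√α θ(α) ≥ √π`, so `4 √π e^{-α/12} ≤ √α ∑ₖ I_k² ≤ 4 √π`.
-/

open MeasureTheory Filter Set Real Topology
open scoped Interval

theorem ConvexOn.map_interval_average_le {g f : ℝ → ℝ} {a b : ℝ} (hg : ConvexOn ℝ univ g)
    (hgc : Continuous g) (hf : Continuous f) (hab : a ≠ b) :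
    g (⨍ x in a..b, f x) ≤ ⨍ x in a..b, g (f x) := by
  have hfin : volume (Ι a b) ≠ ⊤ := by simp [uIoc, Real.volume_Ioc]
  refine hg.map_set_average_le hgc.continuousOn isClosed_univ ?_ hfin (by simp)
    (hf.integrableOn_uIcc.mono_set uIoc_subset_uIcc)
    ((hgc.comp hf).integrableOn_uIcc.mono_set uIoc_subset_uIcc)
  simpa [uIoc, Real.volume_Ioc] using fun h => lt_of_le_of_ne h hab.symm

theorem sq_intervalIntegral_le {f : ℝ → ℝ} (hf : Continuous f) (a b : ℝ) :
    (∫ x in a..b, f x) ^ 2 ≤ (b - a) * ∫ x in a..b, f x ^ 2 := by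
  rcases eq_or_ne a b with rfl | hab
  · simp
  have hba : b - a ≠ 0 := sub_ne_zero.mpr hab.symm
  have h := (even_two.convexOn_pow (𝕜 := ℝ)).map_interval_average_le (continuous_pow 2) hf hab
  rw [interval_average_eq_div, interval_average_eq_div, div_pow] at h
  calc (∫ x in a..b, f x) ^ 2 = (b - a) ^ 2 * ((∫ x in a..b, f x) ^ 2 / (b - a) ^ 2) := by
        field_simp
    _ ≤ (b - a) ^ 2 * ((∫ x in a..b, f x ^ 2) / (b - a)) := by gcongr
    _ = (b - a) * ∫ x in a..b, f x ^ 2 := by field_simp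

theorem hasSum_intervalIntegral_add_mul {E : Type*} [NormedAddCommGroup E] [NormedSpace ℝ E]
    [CompleteSpace E] {f : ℝ → E} (hf : Integrable f) {p : ℝ} (hp : 0 < p) (a : ℝ) :
    HasSum (fun n : ℤ => ∫ x in a + n * p..a + (n + 1) * p, f x) (∫ x, f x) := by
  have h := hasSum_integral_iUnion (fun n : ℤ => measurableSet_Ioc)
    (pairwise_disjoint_Ioc_add_zsmul a p)
    (by rw [iUnion_Ioc_add_zsmul hp a]; exact hf.integrableOn)
  rw [iUnion_Ioc_add_zsmul hp a, Measure.restrict_univ] at h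
  refine h.congr_fun fun n => ?_
  rw [intervalIntegral.integral_of_le (by nlinarith), zsmul_eq_mul, zsmul_eq_mul]
  push_cast
  rfl

theorem summable_exp_neg_mul_int_sq {c : ℝ} (hc : 0 < c) :
    Summable fun n : ℤ => exp (-c * n ^ 2) := by
  refine (summable_pow_mul_jacobiTheta₂_term_bound 0 (div_pos hc pi_pos) 0).congr fun n => ?_
  simp only [pow_zero, one_mul, mul_zero, zero_mul, sub_zero]
  congr 1
  field_simp

theorem one_le_tsum_exp_neg_mul_int_sq {c : ℝ} (hc : 0 < c) :
    1 ≤ ∑' n : ℤ, exp (-c * n ^ 2) := by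
  simpa using (summable_exp_neg_mul_int_sq hc).le_tsum 0 fun n _ => (exp_pos _).le

theorem sqrt_pi_le_sqrt_mul_tsum_exp_neg_mul_int_sq {c : ℝ} (hc : 0 < c) :
    √π ≤ √c * ∑' n : ℤ, exp (-c * n ^ 2) := by
  have key := Real.tsum_exp_neg_mul_int_sq (div_pos hc pi_pos)
  have h1 : ∀ n : ℤ, -π * (c / π) * (n : ℝ) ^ 2 = -c * n ^ 2 := fun n => by field_simp
  have h2 : ∀ n : ℤ, -π / (c / π) * (n : ℝ) ^ 2 = -(π ^ 2 / c) * n ^ 2 := fun n => by field_simp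
  simp only [h1, h2, ← sqrt_eq_rpow, sqrt_div hc.le] at key
  have hsqrt : √c * (1 / (√c / √π)) = √π := by
    field_simp [(sqrt_pos.mpr hc).ne']
  rw [key, ← mul_assoc, hsqrt]
  exact le_mul_of_one_le_right (sqrt_nonneg _) (one_le_tsum_exp_neg_mul_int_sq (by positivity))

theorem hasSum_intervalIntegral_exp_neg_mul_sq {b : ℝ} (hb : 0 < b) :
    HasSum (fun k : ℤ => ∫ x in (2 * (k : ℝ) - 1)..(2 * (k : ℝ) + 1), exp (-b * x ^ 2))
      (√(π / b)) := by
  rw [← integral_gaussian]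
  refine (hasSum_intervalIntegral_add_mul (integrable_exp_neg_mul_sq hb) two_pos (-1)).congr_fun
    fun k => ?_
  congr 1 <;> ring

theorem exp_le_sq_intervalIntegral_exp_neg_mul_sq (α k : ℝ) :
    4 * exp (-(α / 12)) * exp (-α * k ^ 2)
      ≤ (∫ x in (2 * k - 1)..(2 * k + 1), exp (-(α * x ^ 2) / 8)) ^ 2 := by
  have hmean : (∫ x in (2 * k - 1)..(2 * k + 1), -(α * x ^ 2) / 8)
      = 2 * (-(α * k ^ 2) / 2 - α / 24) := by
    simp only [intervalIntegral.integral_div, intervalIntegral.integral_neg,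
      intervalIntegral.integral_const_mul, integral_pow]
    ring
  have h := convexOn_exp.map_interval_average_le continuous_exp
    (by fun_prop : Continuous fun x : ℝ => -(α * x ^ 2) / 8) (by linarith : 2 * k - 1 ≠ 2 * k + 1)
  rw [interval_average_eq_div, interval_average_eq_div, hmean,
    show 2 * k + 1 - (2 * k - 1) = 2 by ring, mul_div_cancel_left₀ _ two_ne_zero] at h
  calc 4 * exp (-(α / 12)) * exp (-α * k ^ 2) = (2 * exp (-(α * k ^ 2) / 2 - α / 24)) ^ 2 := by
        rw [mul_pow, sq (exp _), ← exp_add, mul_assoc, ← exp_add]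
        ring_nf
    _ ≤ _ := pow_le_pow_left₀ (by positivity) (by linarith) 2

theorem sq_intervalIntegral_exp_neg_mul_sq_le (α k : ℝ) :
    (∫ x in (2 * k - 1)..(2 * k + 1), exp (-(α * x ^ 2) / 8)) ^ 2
      ≤ 2 * ∫ x in (2 * k - 1)..(2 * k + 1), exp (-(α / 4) * x ^ 2) := by
  have h := sq_intervalIntegral_le (f := fun x => exp (-(α * x ^ 2) / 8)) (by fun_prop)
    (2 * k - 1) (2 * k + 1)
  have hsq : ∀ x : ℝ, exp (-(α * x ^ 2) / 8) ^ 2 = exp (-(α / 4) * x ^ 2) := fun x => by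
    rw [← exp_nat_mul]
    ring_nf
  simp only [hsq] at h
  rwa [show 2 * k + 1 - (2 * k - 1) = 2 by ring] at h

section GaussianBlocks

variable {α : ℝ}

theorem summable_sq_intervalIntegral_exp_neg_mul_sq (hα : 0 < α) :
    Summable fun k : ℤ =>
      (∫ x in (2 * (k : ℝ) - 1)..(2 * (k : ℝ) + 1), exp (-(α * x ^ 2) / 8)) ^ 2 :=
  .of_nonneg_of_le (fun k => sq_nonneg _) (fun k => sq_intervalIntegral_exp_neg_mul_sq_le α k)
    ((hasSum_intervalIntegral_exp_neg_mul_sq (by positivity : 0 < α / 4)).summable.mul_left 2)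

theorem sqrt_mul_tsum_sq_intervalIntegral_exp_le (hα : 0 < α) :
    √α * ∑' k : ℤ, (∫ x in (2 * (k : ℝ) - 1)..(2 * (k : ℝ) + 1), exp (-(α * x ^ 2) / 8)) ^ 2
      ≤ 4 * √π := by
  have hsum : ∑' k : ℤ, (∫ x in (2 * (k : ℝ) - 1)..(2 * (k : ℝ) + 1), exp (-(α * x ^ 2) / 8)) ^ 2
      ≤ 2 * √(π / (α / 4)) :=
    hasSum_le (fun k : ℤ => sq_intervalIntegral_exp_neg_mul_sq_le α k)
      (summable_sq_intervalIntegral_exp_neg_mul_sq hα).hasSum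
      ((hasSum_intervalIntegral_exp_neg_mul_sq (by positivity : 0 < α / 4)).mul_left 2)
  calc _ ≤ √α * (2 * √(π / (α / 4))) := mul_le_mul_of_nonneg_left hsum (sqrt_nonneg _)
    _ = 4 * √π := by
        rw [show π / (α / 4) = 2 ^ 2 * (π / α) by ring, sqrt_mul (by positivity),
          sqrt_sq zero_le_two, sqrt_div pi_pos.le]
        field_simp [(sqrt_pos.mpr hα).ne']
        ring

theorem exp_mul_sqrt_pi_le_sqrt_mul_tsum_sq_intervalIntegral_exp (hα : 0 < α) :
    4 * exp (-(α / 12)) * √π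
      ≤ √α * ∑' k : ℤ,
        (∫ x in (2 * (k : ℝ) - 1)..(2 * (k : ℝ) + 1), exp (-(α * x ^ 2) / 8)) ^ 2 := by
  have hθ := (summable_exp_neg_mul_int_sq hα).mul_left (4 * exp (-(α / 12)))
  calc 4 * exp (-(α / 12)) * √π ≤ 4 * exp (-(α / 12)) * (√α * ∑' k : ℤ, exp (-α * k ^ 2)) := by
        gcongr
        exact sqrt_pi_le_sqrt_mul_tsum_exp_neg_mul_int_sq hα
    _ = √α * ∑' k : ℤ, 4 * exp (-(α / 12)) * exp (-α * k ^ 2) := by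
        rw [tsum_mul_left]
        ring
    _ ≤ _ := mul_le_mul_of_nonneg_left
        (hθ.tsum_le_tsum (fun k => exp_le_sq_intervalIntegral_exp_neg_mul_sq α k)
          (summable_sq_intervalIntegral_exp_neg_mul_sq hα)) (sqrt_nonneg _)

end GaussianBlocks

/-- `Σ_{k∈ℤ} (∫_{2k-1}^{2k+1} e^{-αx²/8} dx)² ~ 4√π/√α` as `α → 0⁺`,
i.e. `√α · Σ_{k∈ℤ} (∫_{2k-1}^{2k+1} e^{-αx²/8} dx)² → 4√π`. -/
theorem gaussian_interval_sum_asymp :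
    Tendsto (fun α : ℝ => Real.sqrt α *
        ∑' k : ℤ, (∫ x in (2 * (k : ℝ) - 1)..(2 * (k : ℝ) + 1),
          Real.exp (-(α * x ^ 2) / 8)) ^ 2)
      (nhdsWithin 0 (Set.Ioi 0)) (nhds (4 * Real.sqrt Real.pi)) := by
  have hlow : Tendsto (fun α : ℝ => 4 * exp (-(α / 12)) * √π) (𝓝[>] 0) (𝓝 (4 * √π)) := by
    have h : Continuous fun α : ℝ => 4 * exp (-(α / 12)) * √π := by fun_prop
    simpa using (h.tendsto 0).mono_left nhdsWithin_le_nhds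
  refine tendsto_of_tendsto_of_tendsto_of_le_of_le' hlow tendsto_const_nhds ?_ ?_ <;>
    filter_upwards [self_mem_nhdsWithin] with α hα
  · exact exp_mul_sqrt_pi_le_sqrt_mul_tsum_sq_intervalIntegral_exp hα
  · exact sqrt_mul_tsum_sq_intervalIntegral_exp_le hα
end
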